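/- Let I ⊆ ℝ be an open interval and let ψ, p : ℝ → ℝ³ be differentiable on I with ψ'(t) = Y ψ(t) and p'(t) = −Yᵀ p(t) for all t ∈ I. Define φⱼ(t) = ⟨p(t), Fⱼ ψ(t)⟩ for j = 1, 2, 3. Then on I the functions satisfy φ₁' = φ₂, φ₂' = −φ₃, φ₃' = φ₂; moreover φ₂ and φ₃ are twice differentiable on I with φ₂'' = −φ₂ and φ₃'' = −φ₃. -/

import Mathlib

open Matrix Real

/-- The generator of the global Grover operator in the large-block limit. -/
noncomputable def Xmat (γ : ℝ) : Matrix (Fin 3) (Fin 3) ℝ :=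
  !![0, (sin γ)^2, sin γ * cos γ;
     -(sin γ)^2, 0, 0;
     -(sin γ * cos γ), 0, 0]

/-- The generator of the local Grover operator in the large-block limit. -/
def Ymat : Matrix (Fin 3) (Fin 3) ℝ :=
  !![0, 1, 0; -1, 0, 0; 0, 0, 0]

/-- The matrix commutator `[A, B] = AB − BA`. -/
def matComm (A B : Matrix (Fin 3) (Fin 3) ℝ) : Matrix (Fin 3) (Fin 3) ℝ := A * B - B * A

noncomputable def F1 (γ : ℝ) : Matrix (Fin 3) (Fin 3) ℝ := Xmat γ - Ymat
noncomputable def F2 (γ : ℝ) : Matrix (Fin 3) (Fin 3) ℝ := matComm (Xmat γ) Ymat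
noncomputable def F3 (γ : ℝ) : Matrix (Fin 3) (Fin 3) ℝ := matComm Ymat (matComm (Xmat γ) Ymat)

/-- The reduced switching variable `φⱼ(t) = ⟨p(t), Fⱼ ψ(t)⟩`. -/
noncomputable def phi (p ψ : ℝ → Fin 3 → ℝ) (F : Matrix (Fin 3) (Fin 3) ℝ) (t : ℝ) : ℝ :=
  p t ⬝ᵥ (F *ᵥ ψ t)


lemma key_deriv_phi (ψ p : ℝ → Fin 3 → ℝ) (t : ℝ)
    (hψ : HasDerivAt ψ (Ymat *ᵥ ψ t) t)
    (hp : HasDerivAt p (-(Ymatᵀ *ᵥ p t)) t)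
    (F : Matrix (Fin 3) (Fin 3) ℝ) :
    HasDerivAt (phi p ψ F) (phi p ψ (matComm F Ymat) t) t := by
  have hψi := hasDerivAt_pi.1 hψ
  have hpi := hasDerivAt_pi.1 hp
  have H : HasDerivAt (fun u => ∑ i, ∑ j, p u i * (F i j * ψ u j))
      (∑ i, ∑ j, ((-(Ymatᵀ *ᵥ p t)) i * (F i j * ψ t j)
        + p t i * (F i j * (Ymat *ᵥ ψ t) j))) t := by
    apply HasDerivAt.fun_sum
    intro i _
    apply HasDerivAt.fun_sum
    intro j _
    exact (hpi i).mul ((hψi j).const_mul (F i j))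
  have e1 : phi p ψ F = fun u => ∑ i, ∑ j, p u i * (F i j * ψ u j) := by
    funext u
    simp [phi, dotProduct, mulVec, Finset.mul_sum]
  rw [e1]
  convert H using 1
  simp [phi, dotProduct, mulVec, vecMul, matComm, Matrix.mul_apply, Ymat, Fin.sum_univ_three,
    Matrix.sub_apply, Matrix.transpose_apply, Matrix.vecHead, Matrix.vecTail,
    Matrix.cons_val_zero, Matrix.cons_val_one, Matrix.head_cons]
  ring

lemma comm_F1 (γ : ℝ) : matComm (F1 γ) Ymat = F2 γ := by
  simp [F1, F2, matComm, sub_mul, mul_sub]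

lemma comm_F2 (γ : ℝ) : matComm (F2 γ) Ymat = -(F3 γ) := by
  ext i j
  fin_cases i <;> fin_cases j <;>
    simp [F2, F3, matComm, Xmat, Ymat, Matrix.mul_apply, Fin.sum_univ_three,
      Matrix.vecHead, Matrix.vecTail, Matrix.cons_val_zero, Matrix.cons_val_one,
      Matrix.head_cons]

lemma comm_F3 (γ : ℝ) : matComm (F3 γ) Ymat = F2 γ := by
  ext i j
  fin_cases i <;> fin_cases j <;>
    simp [F2, F3, matComm, Xmat, Ymat, Matrix.mul_apply, Fin.sum_univ_three,
      Matrix.vecHead, Matrix.vecTail, Matrix.cons_val_zero, Matrix.cons_val_one,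
      Matrix.head_cons]

lemma phi_neg_mat (p ψ : ℝ → Fin 3 → ℝ) (F : Matrix (Fin 3) (Fin 3) ℝ) (t : ℝ) :
    phi p ψ (-F) t = -(phi p ψ F t) := by
  simp [phi, Matrix.neg_mulVec]

/-- Along a pure `Y`-arc on an open interval `I`, the reduced variables
satisfy `φ₁' = φ₂`, `φ₂' = −φ₃`, `φ₃' = φ₂`; moreover `φ₂` and `φ₃` are twice
differentiable on `I` with `φ₂'' = −φ₂` and `φ₃'' = −φ₃`. -/
theorem stmt_4 (γ : ℝ) (hγ : γ ∈ Set.Ioo 0 (π/2)) (I : Set ℝ)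
    (hIopen : IsOpen I) (hIinterval : I.OrdConnected)
    (ψ p : ℝ → Fin 3 → ℝ)
    (hψ : ∀ t ∈ I, HasDerivAt ψ (Ymat *ᵥ ψ t) t)
    (hp : ∀ t ∈ I, HasDerivAt p (-(Ymatᵀ *ᵥ p t)) t) :
    ∀ t ∈ I,
      HasDerivAt (phi p ψ (F1 γ)) (phi p ψ (F2 γ) t) t ∧
      HasDerivAt (phi p ψ (F2 γ)) (-(phi p ψ (F3 γ) t)) t ∧
      HasDerivAt (phi p ψ (F3 γ)) (phi p ψ (F2 γ) t) t ∧
      -- `φ₂'' = −φ₂`: the derivative `φ₂' = −φ₃` is itself differentiable with derivative `−φ₂`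
      HasDerivAt (fun u => -(phi p ψ (F3 γ) u)) (-(phi p ψ (F2 γ) t)) t ∧
      -- `φ₃'' = −φ₃`: the derivative `φ₃' = φ₂` is itself differentiable with derivative `−φ₃`
      HasDerivAt (phi p ψ (F2 γ)) (-(phi p ψ (F3 γ) t)) t := by

  intro t ht
  have k1 := key_deriv_phi ψ p t (hψ t ht) (hp t ht) (F1 γ)
  have k2 := key_deriv_phi ψ p t (hψ t ht) (hp t ht) (F2 γ)
  have k3 := key_deriv_phi ψ p t (hψ t ht) (hp t ht) (F3 γ)
  rw [comm_F1] at k1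
  rw [comm_F2, phi_neg_mat] at k2
  rw [comm_F3] at k3
  exact ⟨k1, k2, k3, k3.neg, k2⟩
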